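/- arXiv:2008.09109 — 5 statements merged into one kernel-verified Lean document; each statement's English description precedes it below -/
import Mathlib

section
/- For the six-dimensional COVID-19 ODE system, the nonnegative orthant ℝ₊⁶ is positively invariant: if (S_u, S_a, E, I, J, R) : ℝ → ℝ⁶ is a solution of the system with nonnegative initial conditions S_u(0), S_a(0), E(0), I(0), J(0), R(0) ≥ 0, then S_u(t), S_a(t), E(t), I(t), J(t), R(t) ≥ 0 for all t ≥ 0. -/
/-!
Nonnegativity is propagated forward in time by continuous induction. Near a nonnegative state
the field is quasi-positive in a quantitative sense: if every component is `≥ -c` and one of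
them equals `-c`, its derivative is `≥ -K c`, where `K` depends on a bound `‖x‖ ≤ κ N` of the
state by the total population `N`. Hence `X + ε e^{(K+1)(t-a)}` cannot reach the boundary of
the orthant, and letting `ε → 0` keeps `X ≥ 0` on a short interval `[a, b]`. A bound
`‖X‖ ≤ κ N` holds just after any nonnegative state: by continuity if `N > 0`, and because
`N' = Π > 0` at the origin, where the incidence terms `· / N` are otherwise uncontrolled.
-/

open Set Filter Topology

theorem IsClosed.Ici_subset_of_forall_mem_nhdsGT {α : Type*} [ConditionallyCompleteLinearOrder α]
    [TopologicalSpace α] [OrderTopology α] [DenselyOrdered α] {s : Set α} {a : α}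
    (hs : IsClosed s) (ha : a ∈ s) (hgt : ∀ x ∈ s, s ∈ 𝓝[>] x) : Ici a ⊆ s := fun _ ht =>
  (hs.inter isClosed_Icc).Icc_subset_of_forall_mem_nhdsWithin ha (fun x hx => hgt x hx.1)
    ⟨ht, le_rfl⟩

lemma HasDerivAt.eventually_pos_nhdsGT {f : ℝ → ℝ} {f' x : ℝ} (hf : HasDerivAt f f' x)
    (hfx : 0 ≤ f x) (hf' : f x = 0 → 0 < f') : ∀ᶠ y in 𝓝[>] x, 0 < f y := by
  rcases hfx.eq_or_lt with h | h
  · have hslope : Tendsto (slope f x) (𝓝[>] x) (𝓝 f') :=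
      (hasDerivAt_iff_tendsto_slope.1 hf).mono_left (nhdsWithin_mono _ fun _ hy => ne_of_gt hy)
    filter_upwards [hslope.eventually (lt_mem_nhds (hf' h.symm)), self_mem_nhdsWithin]
      with y hy hxy
    rw [slope_def_field, ← h, sub_zero] at hy
    exact (div_pos_iff_of_pos_right (sub_pos.2 hxy)).1 hy
  · exact nhdsWithin_le_nhds (hf.continuousAt.eventually (lt_mem_nhds h))

section Orthant

variable {ι : Type*} [Fintype ι]

theorem nonneg_on_Icc_of_contact_ge {X X' : ℝ → ι → ℝ} {a b K : ℝ}
    (hX : ∀ t, HasDerivAt X (X' t) t) (ha : ∀ i, 0 ≤ X a i)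
    (hcontact : ∀ t ∈ Ioo a b, ∀ c > 0, (∀ k, -c ≤ X t k) → ∀ i, X t i = -c → -(K * c) ≤ X' t i) :
    ∀ t ∈ Icc a b, ∀ i, 0 ≤ X t i := by
  have hXi : ∀ i t, HasDerivAt (fun s => X s i) (X' t i) t := fun i t => hasDerivAt_pi.1 (hX t) i
  -- at a contact `X t i = -w t` the barrier `w` grows faster than `X · i` can decrease
  have hbarrier : ∀ ε > 0, ∀ t ∈ Icc a b, ∀ i, -(ε * Real.exp ((K + 1) * (t - a))) ≤ X t i := by
    intro ε hε
    set w : ℝ → ℝ := fun t => ε * Real.exp ((K + 1) * (t - a)) with hw_def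
    have hw : ∀ t, HasDerivAt w ((K + 1) * w t) t := fun t => by
      simpa [hw_def, mul_comm, mul_left_comm, mul_assoc] using
        (((hasDerivAt_id t).sub_const a).const_mul (K + 1)).exp.const_mul ε
    have hw_pos : ∀ t, 0 < w t := fun t => by positivity
    set s := {t | ∀ i, 0 ≤ X t i + w t}
    have hs : IsClosed s := by
      simp only [s, ofPred_forall]
      exact isClosed_iInter fun i => isClosed_le continuous_const
        (continuous_iff_continuousAt.2 fun t => ((hXi i t).add (hw t)).continuousAt)
    have hsub : Icc a b ⊆ s := by
      refine (hs.inter isClosed_Icc).Icc_subset_of_forall_mem_nhdsWithin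
        (fun i => by linarith [ha i, hw_pos a]) fun x ⟨hx, hxa, hxb⟩ => ?_
      refine eventually_all.2 fun i => ?_
      refine ((hXi i x).add (hw x)).eventually_pos_nhdsGT (hx i) (fun h0 => ?_) |>.mono
        fun _ h => h.le
      simp only [Pi.add_apply] at h0
      have hxa' : a < x := hxa.lt_of_ne fun hax => by
        subst hax; linarith [ha i, hw_pos a]
      have := hcontact x ⟨hxa', hxb⟩ (w x) (hw_pos x) (fun k => by linarith [hx k]) i
        (by linarith)
      nlinarith [hw_pos x]
    intro t ht i
    linarith [hsub ht i]
  intro t ht i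
  have hE := Real.exp_pos ((K + 1) * (t - a))
  refine le_of_forall_pos_le_add fun ε hε => ?_
  have := hbarrier (ε / Real.exp ((K + 1) * (t - a))) (by positivity) t ht i
  rw [div_mul_cancel₀ _ hE.ne'] at this
  linarith

theorem exists_eventually_norm_le_mul_sum {X : ℝ → ι → ℝ} {X₀' : ι → ℝ} {a : ℝ}
    (hX : HasDerivAt X X₀' a) (ha : ∀ i, 0 ≤ X a i) (hmass : X a = 0 → 0 < ∑ i, X₀' i) :
    ∃ κ, ∀ᶠ t in 𝓝[>] a, 0 < ∑ i, X t i ∧ ‖X t‖ ≤ κ * ∑ i, X t i := by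
  set N : ℝ → ℝ := fun t => ∑ i, X t i
  have hN : HasDerivAt N (∑ i, X₀' i) a := HasDerivAt.fun_sum fun i _ => hasDerivAt_pi.1 hX i
  have hNa : 0 ≤ N a := Finset.sum_nonneg fun i _ => ha i
  have hX0 : N a = 0 → X a = 0 := fun h => funext fun i =>
    (Finset.sum_eq_zero_iff_of_nonneg fun i _ => ha i).1 h i (Finset.mem_univ i)
  obtain ⟨r, hr⟩ : ∃ r, Tendsto (fun t => ‖X t‖ / N t) (𝓝[>] a) (𝓝 r) := by
    rcases hNa.eq_or_lt with h | h
    · -- at the origin the ratio is that of the slopes of `X` and `N`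
      refine ⟨_, ((hasDerivAt_iff_tendsto_slope_left_right.1 hX).2.norm.div
        (hasDerivAt_iff_tendsto_slope_left_right.1 hN).2 (hmass (hX0 h.symm)).ne').congr' ?_⟩
      filter_upwards [self_mem_nhdsWithin] with t ht
      have ht' : 0 < t - a := sub_pos.2 ht
      simp only [Pi.div_apply, slope_def_module, hX0 h.symm, ← h, sub_zero, norm_smul,
        norm_inv, Real.norm_of_nonneg ht'.le, smul_eq_mul]
      exact mul_div_mul_left _ _ (inv_ne_zero ht'.ne')
    · exact ⟨_, (hX.continuousAt.norm.div hN.continuousAt h.ne').mono_left nhdsWithin_le_nhds⟩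
  refine ⟨r + 1, ?_⟩
  filter_upwards [hN.eventually_pos_nhdsGT hNa fun h => hmass (hX0 h),
    hr.eventually (gt_mem_nhds (lt_add_one r))] with t hNt hlt
  exact ⟨hNt, ((div_lt_iff₀ hNt).1 hlt).le⟩

end Orthant

lemma neg_mul_le_mul_of_neg_le {u A q κ : ℝ} (hu : -A ≤ u) (hA : 0 ≤ A) (hq : 0 ≤ q)
    (hqκ : q ≤ κ) : -(A * κ) ≤ u * q := by
  nlinarith [mul_nonneg (neg_le_iff_add_nonneg.1 hu) hq, mul_nonneg hA (sub_nonneg.2 hqκ)]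

lemma neg_le_mul_div_of_bounds {u v c κ n : ℝ} (hn : 0 < n) (hc : 0 ≤ c) (hcn : c ≤ κ * n)
    (hu : -(2 * c) ≤ u) (hu' : u ≤ 2 * (κ * n)) (hv : -(2 * c) ≤ v) (hv' : v ≤ 2 * (κ * n)) :
    -(12 * κ * c) ≤ u * v / n := by
  rw [le_div_iff₀ hn]
  nlinarith [mul_nonneg (neg_le_iff_add_nonneg.1 hu) (neg_le_iff_add_nonneg.1 hv),
    mul_le_mul_of_nonneg_left hu' hc, mul_le_mul_of_nonneg_left hv' hc,
    mul_le_mul_of_nonneg_left hcn hc]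

-- the state `x` is `(S_u, S_a, E, I, J, R)`, and `∑ k, x k` is the total population `N`
noncomputable def covidField (Pi β ν α θ ε γ p η σ₁ σ₂ δ₁ δ₂ μ : ℝ) (x : Fin 6 → ℝ) : Fin 6 → ℝ :=
  ![Pi - β * (x 3 + ν * x 4) * x 0 / (∑ k, x k) - α * x 1 * x 0 / (∑ k, x k) - μ * x 0
      + θ * x 1,
    α * x 1 * x 0 / (∑ k, x k) - ε * β * (x 3 + ν * x 4) * x 1 / (∑ k, x k) - (μ + θ) * x 1,
    β * (x 3 + ν * x 4) * (x 0 + ε * x 1) / (∑ k, x k) - (γ + μ) * x 2,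
    (1 - p) * γ * x 2 - (η + σ₁ + μ + δ₁) * x 3,
    p * γ * x 2 + η * x 3 - (σ₂ + μ + δ₂) * x 4,
    σ₁ * x 3 + σ₂ * x 4 - μ * x 5]

section Field

variable {Pi β ν α θ ε γ p η σ₁ σ₂ δ₁ δ₂ μ : ℝ}

theorem covidField_contact_ge (hPi : 0 ≤ Pi) (hβ : 0 ≤ β) (hν : 0 ≤ ν) (hν1 : ν ≤ 1)
    (hα : 0 ≤ α) (hθ : 0 ≤ θ) (hε : 0 ≤ ε) (hε1 : ε ≤ 1) (hγ : 0 ≤ γ) (hp : 0 ≤ p)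
    (hp1 : p ≤ 1) (hη : 0 ≤ η) (hσ₁ : 0 ≤ σ₁) (hσ₂ : 0 ≤ σ₂) (hδ₁ : 0 ≤ δ₁) (hδ₂ : 0 ≤ δ₂)
    (hμ : 0 ≤ μ) {x : Fin 6 → ℝ} {κ c : ℝ} (hN : 0 < ∑ k, x k) (hx : ‖x‖ ≤ κ * ∑ k, x k)
    (hc : 0 < c) (hlow : ∀ k, -c ≤ x k) (i : Fin 6) (hi : x i = -c) :
    -((θ + γ + η + σ₁ + σ₂ + (α + 12 * β) * κ) * c) ≤
      covidField Pi β ν α θ ε γ p η σ₁ σ₂ δ₁ δ₂ μ x i := by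
  set n := ∑ k, x k with hn
  have habs : ∀ k, |x k| ≤ κ * n := fun k => (norm_le_pi_norm x k).trans hx
  have hup : ∀ k, x k ≤ κ * n := fun k => (le_abs_self _).trans (habs k)
  have hcn : c ≤ κ * n := by linarith [neg_abs_le (x i), habs i]
  have hκ : 0 ≤ κ := by nlinarith
  -- at a contact the incidence terms `· / n` are controlled through `c / n ≤ κ`
  have hq : c / n ≤ κ := (div_le_iff₀ hN).2 hcn
  have hq0 : 0 ≤ c / n := by positivity
  have hIJ : -(2 * c) ≤ x 3 + ν * x 4 := by nlinarith [hlow 3, hlow 4]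
  have hrates : 0 ≤ (γ + η + σ₁ + σ₂) * c := by positivity
  have hβκc : 0 ≤ β * κ * c := by positivity
  have hακc : 0 ≤ α * κ * c := by positivity
  have hμc : 0 ≤ μ * c := by positivity
  have h1p := sub_nonneg.2 hp1
  fin_cases i <;>
    simp only [covidField, Fin.isValue, Fin.zero_eta, Fin.mk_one, Fin.reduceFinMk,
      Matrix.cons_val, ← hn] at hi ⊢
  · have h1 := neg_mul_le_mul_of_neg_le hIJ (by positivity) hq0 hq
    have h2 := neg_mul_le_mul_of_neg_le (hlow 1) hc.le hq0 hq
    rw [hi]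
    linear_combination hPi + mul_le_mul_of_nonneg_left h1 hβ + mul_le_mul_of_nonneg_left h2 hα
      + mul_le_mul_of_nonneg_left (hlow 1) hθ + hμc + hrates + 10 * hβκc
  · have h1 := neg_mul_le_mul_of_neg_le hIJ (by positivity) hq0 hq
    have h3 : x 0 * (c / n) ≤ κ * c := by
      rw [mul_div_assoc', div_le_iff₀ hN]; nlinarith [hup 0]
    have hε' : 0 ≤ (1 - ε) * β * κ * c := by
      have := sub_nonneg.2 hε1; positivity
    rw [hi]
    linear_combination mul_le_mul_of_nonneg_left h3 hα
      + mul_le_mul_of_nonneg_left h1 (mul_nonneg hε hβ) + 2 * hε' + 10 * hβκc + hμc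
      + 2 * mul_nonneg hθ hc.le + hrates
  · have huv := neg_le_mul_div_of_bounds hN hc.le hcn hIJ (by nlinarith [hup 3, hup 4])
      (by nlinarith [hlow 0, hlow 1] : -(2 * c) ≤ x 0 + ε * x 1) (by nlinarith [hup 0, hup 1])
    rw [hi]
    linear_combination mul_le_mul_of_nonneg_left huv hβ + mul_nonneg hγ hc.le + hμc
      + mul_nonneg hθ hc.le + hrates + hακc
  · rw [hi]
    linear_combination mul_nonneg (mul_nonneg h1p hγ) (neg_le_iff_add_nonneg.1 (hlow 2))
      + mul_nonneg (by positivity : 0 ≤ p * γ + η + σ₁ + μ + δ₁ + θ + η + σ₁ + σ₂) hc.le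
      + hακc + 12 * hβκc
  · rw [hi]
    linear_combination mul_nonneg (mul_nonneg hp hγ) (neg_le_iff_add_nonneg.1 (hlow 2))
      + mul_nonneg hη (neg_le_iff_add_nonneg.1 (hlow 3))
      + mul_nonneg (by positivity : 0 ≤ (1 - p) * γ + θ + σ₁ + σ₂ + σ₂ + μ + δ₂) hc.le
      + hακc + 12 * hβκc
  · rw [hi]
    linear_combination mul_nonneg hσ₁ (neg_le_iff_add_nonneg.1 (hlow 3))
      + mul_nonneg hσ₂ (neg_le_iff_add_nonneg.1 (hlow 4))
      + mul_nonneg (by positivity : 0 ≤ θ + γ + η + μ) hc.le + hακc + 12 * hβκc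

theorem covidField_eventually_nonneg (hPi : 0 < Pi)
    (hβ : 0 ≤ β) (hν : 0 ≤ ν) (hν1 : ν ≤ 1) (hα : 0 ≤ α) (hθ : 0 ≤ θ) (hε : 0 ≤ ε)
    (hε1 : ε ≤ 1) (hγ : 0 ≤ γ) (hp : 0 ≤ p) (hp1 : p ≤ 1) (hη : 0 ≤ η) (hσ₁ : 0 ≤ σ₁)
    (hσ₂ : 0 ≤ σ₂) (hδ₁ : 0 ≤ δ₁) (hδ₂ : 0 ≤ δ₂) (hμ : 0 ≤ μ) {X : ℝ → Fin 6 → ℝ}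
    (hX : ∀ t, HasDerivAt X (covidField Pi β ν α θ ε γ p η σ₁ σ₂ δ₁ δ₂ μ (X t)) t) {a : ℝ}
    (ha : ∀ i, 0 ≤ X a i) : ∀ᶠ t in 𝓝[>] a, ∀ i, 0 ≤ X t i := by
  obtain ⟨κ, hκ⟩ := exists_eventually_norm_le_mul_sum (hX a) ha fun h0 => by
    simpa [h0, covidField, Fin.sum_univ_six] using hPi
  obtain ⟨b, hab, hb⟩ := mem_nhdsGT_iff_exists_Ioo_subset.1 hκ
  filter_upwards [Icc_mem_nhdsGT hab] with t ht
  exact nonneg_on_Icc_of_contact_ge hX ha (fun s hs c hc hlow i hi =>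
    covidField_contact_ge hPi.le hβ hν hν1 hα hθ hε hε1 hγ hp hp1 hη hσ₁ hσ₂ hδ₁ hδ₂ hμ
      (hb hs).1 (hb hs).2 hc hlow i hi) t ht

end Field

/-- For the six-dimensional COVID-19 ODE system, the nonnegative
orthant is positively invariant: a solution with nonnegative initial data stays
nonnegative for all `t ≥ 0`. -/
theorem covid_nonneg_invariant
    (Pi β ν α θ ε γ p η σ₁ σ₂ δ₁ δ₂ μ : ℝ)
    (hPi : 0 < Pi) (hβ : 0 < β) (hν : 0 < ν) (hν1 : ν < 1) (hα : 0 < α)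
    (hθ : 0 < θ) (hε : 0 < ε) (hε1 : ε < 1) (hγ : 0 < γ)
    (hp : 0 < p) (hp1 : p < 1) (hη : 0 < η) (hσ₁ : 0 < σ₁) (hσ₂ : 0 < σ₂)
    (hδ₁ : 0 < δ₁) (hδ₂ : 0 < δ₂) (hμ : 0 < μ)
    (S_u S_a E I J R : ℝ → ℝ)
    (hS_u : ∀ t, HasDerivAt S_u
      (Pi - β * (I t + ν * J t) * S_u t / (S_u t + S_a t + E t + I t + J t + R t)
        - α * S_a t * S_u t / (S_u t + S_a t + E t + I t + J t + R t)
        - μ * S_u t + θ * S_a t) t)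
    (hS_a : ∀ t, HasDerivAt S_a
      (α * S_a t * S_u t / (S_u t + S_a t + E t + I t + J t + R t)
        - ε * β * (I t + ν * J t) * S_a t / (S_u t + S_a t + E t + I t + J t + R t)
        - (μ + θ) * S_a t) t)
    (hE : ∀ t, HasDerivAt E
      (β * (I t + ν * J t) * (S_u t + ε * S_a t) / (S_u t + S_a t + E t + I t + J t + R t)
        - (γ + μ) * E t) t)
    (hI : ∀ t, HasDerivAt I ((1 - p) * γ * E t - (η + σ₁ + μ + δ₁) * I t) t)
    (hJ : ∀ t, HasDerivAt J (p * γ * E t + η * I t - (σ₂ + μ + δ₂) * J t) t)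
    (hR : ∀ t, HasDerivAt R (σ₁ * I t + σ₂ * J t - μ * R t) t)
    (hS_u0 : 0 ≤ S_u 0) (hS_a0 : 0 ≤ S_a 0) (hE0 : 0 ≤ E 0)
    (hI0 : 0 ≤ I 0) (hJ0 : 0 ≤ J 0) (hR0 : 0 ≤ R 0) :
    ∀ t ≥ (0 : ℝ),
      0 ≤ S_u t ∧ 0 ≤ S_a t ∧ 0 ≤ E t ∧ 0 ≤ I t ∧ 0 ≤ J t ∧ 0 ≤ R t := by
  set X : ℝ → Fin 6 → ℝ := fun t => ![S_u t, S_a t, E t, I t, J t, R t]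
  have hX : ∀ t, HasDerivAt X (covidField Pi β ν α θ ε γ p η σ₁ σ₂ δ₁ δ₂ μ (X t)) t := by
    intro t
    refine hasDerivAt_pi.2 fun i => ?_
    fin_cases i <;>
      simp only [X, covidField, Fin.sum_univ_six, Fin.isValue, Fin.zero_eta, Fin.mk_one,
        Fin.reduceFinMk, Matrix.cons_val, Matrix.cons_val_zero, Matrix.cons_val_one]
    exacts [hS_u t, hS_a t, hE t, hI t, hJ t, hR t]
  have hXc : Continuous X := continuous_iff_continuousAt.2 fun t => (hX t).continuousAt
  have hs : IsClosed {t | ∀ i, 0 ≤ X t i} := by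
    simp only [ofPred_forall]
    exact isClosed_iInter fun i => isClosed_le continuous_const ((continuous_apply i).comp hXc)
  have hnonneg := hs.Ici_subset_of_forall_mem_nhdsGT
    (a := 0) (by intro i; fin_cases i <;> assumption) fun a ha =>
    covidField_eventually_nonneg hPi hβ.le hν.le hν1.le hα.le hθ.le hε.le hε1.le hγ.le hp.le
      hp1.le hη.le hσ₁.le hσ₂.le hδ₁.le hδ₂.le hμ.le hX ha
  intro t ht
  exact ⟨hnonneg ht 0, hnonneg ht 1, hnonneg ht 2, hnonneg ht 3, hnonneg ht 4, hnonneg ht 5⟩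
end

section
/- If max{R₁, α/(μ+θ)} < 1, then every eigenvalue of the Jacobian matrix J_{E₀} of the COVID-19 model at the awareness-free disease-free equilibrium E₀ has negative real part (so E₀ is locally asymptotically stable); if max{R₁, α/(μ+θ)} > 1, then J_{E₀} has at least one eigenvalue with positive real part (so E₀ is unstable). -/
/-!
The characteristic polynomial of `J_{E₀}` factors as `(z + μ)² (z - (α - (μ + θ)))` times the
characteristic polynomial of the 3 × 3 infected block `A`, a Metzler matrix with negative diagonal.
Its constant term is `det (-A) = (μ + γ) m₁ m₂ (1 - R₁)`. When `R₁ < 1` this makes the diagonal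
dominate the off-diagonal gains, which gives all three Routh–Hurwitz conditions for the cubic;
when `R₁ > 1` the monic cubic is negative at `0` and so has a positive real root.
-/

open Polynomial

theorem Complex.re_neg_of_cubic_eq_zero {a b c : ℝ} (ha : 0 < a) (hb : 0 < b) (hc : 0 < c)
    (habc : c < a * b) {z : ℂ} (hz : z ^ 3 + a * z ^ 2 + b * z + c = 0) : z.re < 0 := by
  have hre := congrArg Complex.re hz
  have him := congrArg Complex.im hz
  simp only [add_re, add_im, mul_re, mul_im, ofReal_re, ofReal_im, pow_succ, pow_zero, one_mul,
    zero_re, zero_im] at hre him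
  set x := z.re
  set y := z.im
  by_contra! hx
  rcases eq_or_ne y 0 with hy | hy
  · rw [hy] at hre
    nlinarith [mul_nonneg (mul_nonneg hx hx) hx, mul_nonneg hx hx]
  · have hy2 : y ^ 2 = 3 * x ^ 2 + 2 * a * x + b := by
      have h : y * (3 * x ^ 2 - y ^ 2 + 2 * a * x + b) = 0 := by linear_combination him
      linarith [(mul_eq_zero.1 h).resolve_left hy]
    -- substituting `y²` turns the real part into `-8x³ - 8ax² - 2(a² + b)x - (ab - c) < 0`
    nlinarith [mul_nonneg (mul_nonneg hx hx) hx, mul_nonneg hx hx,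
      mul_nonneg (mul_nonneg ha.le hx) hx, mul_nonneg hb.le hx,
      mul_nonneg (mul_nonneg ha.le ha.le) hx]

theorem exists_pos_cubic_eq_zero (a b : ℝ) {c : ℝ} (hc : c < 0) :
    ∃ x : ℝ, 0 < x ∧ x ^ 3 + a * x ^ 2 + b * x + c = 0 := by
  set f : ℝ → ℝ := fun x ↦ x ^ 3 + a * x ^ 2 + b * x + c
  set t : ℝ := 1 + |a| + |b| + |c|
  have ht : 1 ≤ t := by linarith [abs_nonneg a, abs_nonneg b, abs_nonneg c]
  have htt : t ≤ t ^ 2 := by nlinarith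
  -- `f t ≥ t ^ 2 (t - |a| - |b| - |c|) = t ^ 2`
  have hft : 0 < f t := by
    have h₁ : -|a| * t ^ 2 ≤ a * t ^ 2 := by nlinarith [neg_abs_le a, sq_nonneg t]
    have h₂ : -|b| * t ^ 2 ≤ b * t := by
      nlinarith [neg_abs_le b, mul_le_mul_of_nonneg_left htt (abs_nonneg b)]
    have h₃ : -|c| * t ^ 2 ≤ c := by
      nlinarith [neg_abs_le c, mul_le_mul_of_nonneg_left (one_le_pow₀ (n := 2) ht) (abs_nonneg c)]
    have : f t = t ^ 3 + a * t ^ 2 + b * t + c := rfl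
    nlinarith
  obtain ⟨x, hx, hfx⟩ : (0 : ℝ) ∈ f '' Set.Icc 0 t :=
    intermediate_value_Icc (by linarith) (by fun_prop) ⟨by simpa [f] using hc.le, hft.le⟩
  refine ⟨x, hx.1.lt_of_ne ?_, hfx⟩
  rintro rfl
  simp [f] at hfx
  linarith

/-- `det (z - A)` for `A = !![-s, u, v; q, -m₁, 0; r, w, -m₂]`, the shape of the infected block
of `J_{E₀}`. -/
def metzlerCubic (s m₁ m₂ u v q r w : ℝ) (z : ℂ) : ℂ :=
  (z + s) * (z + m₁) * (z + m₂) - u * q * (z + m₂) - v * (q * w + r * (z + m₁))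

section metzlerCubic

variable {s m₁ m₂ u v q r w : ℝ}

theorem metzlerCubic_eq (z : ℂ) :
    metzlerCubic s m₁ m₂ u v q r w z =
      z ^ 3 + ((s + m₁ + m₂ : ℝ) : ℂ) * z ^ 2
        + ((s * m₁ + s * m₂ + m₁ * m₂ - u * q - v * r : ℝ) : ℂ) * z
        + ((s * m₁ * m₂ - (u * q * m₂ + v * (q * w + r * m₁)) : ℝ) : ℂ) := by
  unfold metzlerCubic
  push_cast
  ring

theorem re_neg_of_metzlerCubic_eq_zero (hs : 0 < s) (hm₁ : 0 < m₁) (hm₂ : 0 < m₂)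
    (hu : 0 ≤ u) (hv : 0 ≤ v) (hq : 0 ≤ q) (hr : 0 ≤ r) (hw : 0 ≤ w)
    (hdet : u * q * m₂ + v * (q * w + r * m₁) < s * m₁ * m₂) {z : ℂ}
    (hz : metzlerCubic s m₁ m₂ u v q r w z = 0) : z.re < 0 := by
  have huq : 0 ≤ u * q := mul_nonneg hu hq
  have hvr : 0 ≤ v * r := mul_nonneg hv hr
  have hvqw : 0 ≤ v * q * w := mul_nonneg (mul_nonneg hv hq) hw
  have h₁ : u * q < s * m₁ := by nlinarith [mul_nonneg hvr hm₁.le]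
  have h₂ : v * r < s * m₂ := by nlinarith [mul_nonneg huq hm₂.le]
  rw [metzlerCubic_eq] at hz
  refine Complex.re_neg_of_cubic_eq_zero (by positivity) (by nlinarith [mul_pos hm₁ hm₂])
    (by linarith) ?_ hz
  nlinarith [mul_lt_mul_of_pos_right h₁ (add_pos hs hm₁),
    mul_lt_mul_of_pos_right h₂ (add_pos hs hm₂),
    mul_pos (mul_pos hm₁ hm₁) hm₂, mul_pos (mul_pos hm₁ hm₂) hm₂, mul_pos (mul_pos hs hm₁) hm₂]

theorem exists_pos_metzlerCubic_eq_zero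
    (hdet : s * m₁ * m₂ < u * q * m₂ + v * (q * w + r * m₁)) :
    ∃ x : ℝ, 0 < x ∧ metzlerCubic s m₁ m₂ u v q r w x = 0 := by
  obtain ⟨x, hx, hroot⟩ := exists_pos_cubic_eq_zero (s + m₁ + m₂)
    (s * m₁ + s * m₂ + m₁ * m₂ - u * q - v * r) (sub_neg.2 hdet)
  refine ⟨x, hx, ?_⟩
  rw [metzlerCubic_eq]
  exact_mod_cast hroot

end metzlerCubic

theorem Matrix.det_fin_six_of_sparse {R : Type*} [CommRing R]
    (d₀ a₀₁ a₀₃ a₀₄ d₁ a₂₂ a₂₃ a₂₄ a₃₂ a₃₃ a₄₂ a₄₃ a₄₄ a₅₃ a₅₄ d₅ : R) :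
    Matrix.det !![d₀, a₀₁, 0, a₀₃, a₀₄, 0;
                  0, d₁, 0, 0, 0, 0;
                  0, 0, a₂₂, a₂₃, a₂₄, 0;
                  0, 0, a₃₂, a₃₃, 0, 0;
                  0, 0, a₄₂, a₄₃, a₄₄, 0;
                  0, 0, 0, a₅₃, a₅₄, d₅]
      = d₀ * d₁ * d₅ * Matrix.det !![a₂₂, a₂₃, a₂₄; a₃₂, a₃₃, 0; a₄₂, a₄₃, a₄₄] := by
  simp [Matrix.det_succ_row_zero, Fin.sum_univ_succ, Fin.succAbove, Matrix.submatrix_apply]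
  ring

def jacobianE₀ (β ν α θ γ p η σ₁ σ₂ δ₁ δ₂ μ : ℝ) : Matrix (Fin 6) (Fin 6) ℝ :=
  !![-μ, -α + θ, 0, -β, -ν * β, 0;
     0, α - (μ + θ), 0, 0, 0, 0;
     0, 0, -(μ + γ), β, ν * β, 0;
     0, 0, (1 - p) * γ, -(η + σ₁ + μ + δ₁), 0, 0;
     0, 0, p * γ, η, -(σ₂ + μ + δ₂), 0;
     0, 0, 0, σ₁, σ₂, -μ]

section jacobianE₀

variable {β ν α θ γ p η σ₁ σ₂ δ₁ δ₂ μ : ℝ}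

theorem eval_charpoly_jacobianE₀ (z : ℂ) :
    ((jacobianE₀ β ν α θ γ p η σ₁ σ₂ δ₁ δ₂ μ).map Complex.ofReal).charpoly.eval z =
      (z + μ) ^ 2 * (z - (α - (μ + θ) : ℝ)) *
        metzlerCubic (μ + γ) (η + σ₁ + μ + δ₁) (σ₂ + μ + δ₂) β (ν * β) ((1 - p) * γ) (p * γ) η
          z := by
  have hchar :
      Matrix.scalar (Fin 6) z - (jacobianE₀ β ν α θ γ p η σ₁ σ₂ δ₁ δ₂ μ).map Complex.ofReal =
      !![z + μ, α - θ, 0, β, ν * β, 0;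
         0, z - (α - (μ + θ)), 0, 0, 0, 0;
         0, 0, z + (μ + γ), -β, -(ν * β), 0;
         0, 0, -((1 - p) * γ), z + (η + σ₁ + μ + δ₁), 0, 0;
         0, 0, -(p * γ), -η, z + (σ₂ + μ + δ₂), 0;
         0, 0, 0, -σ₁, -σ₂, z + μ] := by
    ext i j
    fin_cases i <;> fin_cases j <;> simp [jacobianE₀] <;> ring
  rw [Matrix.eval_charpoly, hchar, Matrix.det_fin_six_of_sparse, Matrix.det_fin_three]
  simp [metzlerCubic]
  ring

theorem isRoot_charpoly_jacobianE₀_iff {z : ℂ} :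
    ((jacobianE₀ β ν α θ γ p η σ₁ σ₂ δ₁ δ₂ μ).map Complex.ofReal).charpoly.IsRoot z ↔
      z = -μ ∨ z = (α - (μ + θ) : ℝ) ∨
        metzlerCubic (μ + γ) (η + σ₁ + μ + δ₁) (σ₂ + μ + δ₂) β (ν * β) ((1 - p) * γ) (p * γ) η
          z = 0 := by
  rw [IsRoot, eval_charpoly_jacobianE₀, mul_eq_zero, mul_eq_zero, pow_eq_zero_iff two_ne_zero,
    add_eq_zero_iff_eq_neg, sub_eq_zero, or_assoc]

end jacobianE₀

theorem covid_E0_local_stability_general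
    (β ν α θ γ p η σ₁ σ₂ δ₁ δ₂ μ : ℝ)
    (hβ : 0 < β) (hν : 0 < ν) (hθ : 0 < θ) (hγ : 0 < γ)
    (hp : 0 < p) (hp1 : p < 1) (hη : 0 < η) (hσ₁ : 0 < σ₁) (hσ₂ : 0 < σ₂)
    (hδ₁ : 0 < δ₁) (hδ₂ : 0 < δ₂) (hμ : 0 < μ)
    (m₁ m₂ R₁ : ℝ)
    (hm₁ : m₁ = η + σ₁ + μ + δ₁)
    (hm₂ : m₂ = σ₂ + μ + δ₂)
    (hR₁ : R₁ = (β * γ / (m₂ * (μ + γ))) * ((1 - p) * (η * ν + m₂) / m₁ + p * ν))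
    (JE₀ : Matrix (Fin 6) (Fin 6) ℝ)
    (hJ : JE₀ = !![-μ, -α + θ, 0, -β, -ν * β, 0;
                   0, α - (μ + θ), 0, 0, 0, 0;
                   0, 0, -(μ + γ), β, ν * β, 0;
                   0, 0, (1 - p) * γ, -(η + σ₁ + μ + δ₁), 0, 0;
                   0, 0, p * γ, η, -(σ₂ + μ + δ₂), 0;
                   0, 0, 0, σ₁, σ₂, -μ]) :
    (max R₁ (α / (μ + θ)) < 1 →
      ∀ z : ℂ, (JE₀.map (fun x : ℝ => (x : ℂ))).charpoly.IsRoot z → z.re < 0) ∧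
    (1 < max R₁ (α / (μ + θ)) →
      ∃ z : ℂ, (JE₀.map (fun x : ℝ => (x : ℂ))).charpoly.IsRoot z ∧ 0 < z.re) := by
  obtain rfl : JE₀ = jacobianE₀ β ν α θ γ p η σ₁ σ₂ δ₁ δ₂ μ := hJ
  have hs : 0 < μ + γ := by positivity
  have hm₁pos : 0 < m₁ := by rw [hm₁]; positivity
  have hm₂pos : 0 < m₂ := by rw [hm₂]; positivity
  have hP : 0 < (μ + γ) * m₁ * m₂ := by positivity
  have hR : R₁ * ((μ + γ) * m₁ * m₂) =
      β * ((1 - p) * γ) * m₂ + ν * β * ((1 - p) * γ * η + p * γ * m₁) := by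
    rw [hR₁]
    field_simp
    ring
  have hroots : ∀ z : ℂ,
      ((jacobianE₀ β ν α θ γ p η σ₁ σ₂ δ₁ δ₂ μ).map Complex.ofReal).charpoly.IsRoot z ↔
      z = -μ ∨ z = (α - (μ + θ) : ℝ) ∨
        metzlerCubic (μ + γ) m₁ m₂ β (ν * β) ((1 - p) * γ) (p * γ) η z = 0 := by
    subst hm₁ hm₂
    exact fun z ↦ isRoot_charpoly_jacobianE₀_iff
  refine ⟨fun hmax z hz ↦ ?_, fun hmax ↦ ?_⟩
  · obtain ⟨hR1, hαθ⟩ := max_lt_iff.1 hmax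
    rw [div_lt_one (by positivity)] at hαθ
    rcases (hroots z).1 hz with rfl | rfl | hz
    · simpa using hμ
    · simpa using hαθ
    · exact re_neg_of_metzlerCubic_eq_zero hs hm₁pos hm₂pos hβ.le (by positivity)
        (mul_nonneg (sub_nonneg.2 hp1.le) hγ.le) (by positivity) hη.le
        (hR ▸ mul_lt_of_lt_one_left hP hR1) hz
  · rcases lt_max_iff.1 hmax with hR1 | hαθ
    · obtain ⟨x, hx, hroot⟩ := exists_pos_metzlerCubic_eq_zero (hR ▸ lt_mul_of_one_lt_left hP hR1)
      exact ⟨x, (hroots x).2 (Or.inr (Or.inr hroot)), by simpa using hx⟩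
    · rw [one_lt_div (by positivity)] at hαθ
      exact ⟨_, (hroots _).2 (Or.inr (Or.inl rfl)), by simpa using hαθ⟩

/-- local stability of the awareness-free disease-free equilibrium.
If `max{R₁, α/(μ+θ)} < 1`, every eigenvalue (root of the characteristic
polynomial over ℂ) of the Jacobian `J_{E₀}` has negative real part; if
`max{R₁, α/(μ+θ)} > 1`, some eigenvalue has positive real part. -/
theorem covid_E0_local_stability
    (β ν α θ γ p η σ₁ σ₂ δ₁ δ₂ μ : ℝ)
    (hβ : 0 < β) (hν : 0 < ν) (hν1 : ν < 1) (hα : 0 < α) (hθ : 0 < θ) (hγ : 0 < γ)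
    (hp : 0 < p) (hp1 : p < 1) (hη : 0 < η) (hσ₁ : 0 < σ₁) (hσ₂ : 0 < σ₂)
    (hδ₁ : 0 < δ₁) (hδ₂ : 0 < δ₂) (hμ : 0 < μ)
    (m₁ m₂ R₁ : ℝ)
    (hm₁ : m₁ = η + σ₁ + μ + δ₁)
    (hm₂ : m₂ = σ₂ + μ + δ₂)
    (hR₁ : R₁ = (β * γ / (m₂ * (μ + γ))) * ((1 - p) * (η * ν + m₂) / m₁ + p * ν))
    (JE₀ : Matrix (Fin 6) (Fin 6) ℝ)
    (hJ : JE₀ = !![-μ, -α + θ, 0, -β, -ν * β, 0;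
                   0, α - (μ + θ), 0, 0, 0, 0;
                   0, 0, -(μ + γ), β, ν * β, 0;
                   0, 0, (1 - p) * γ, -(η + σ₁ + μ + δ₁), 0, 0;
                   0, 0, p * γ, η, -(σ₂ + μ + δ₂), 0;
                   0, 0, 0, σ₁, σ₂, -μ]) :
    (max R₁ (α / (μ + θ)) < 1 →
      ∀ z : ℂ, (JE₀.map (fun x : ℝ => (x : ℂ))).charpoly.IsRoot z → z.re < 0) ∧
    (1 < max R₁ (α / (μ + θ)) →
      ∃ z : ℂ, (JE₀.map (fun x : ℝ => (x : ℂ))).charpoly.IsRoot z ∧ 0 < z.re) :=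
  covid_E0_local_stability_general β ν α θ γ p η σ₁ σ₂ δ₁ δ₂ μ hβ hν hθ hγ hp hp1 hη hσ₁ hσ₂ hδ₁ hδ₂
    hμ m₁ m₂ R₁ hm₁ hm₂ hR₁ JE₀ hJ
end

section
/- If α > μ + θ, then E₁ = (Π(μ+θ)/(μα), Π(α−(μ+θ))/(μα), 0, 0, 0, 0) is an equilibrium of the COVID-19 ODE system with positive S_a-component, and it is the unique equilibrium of the system with E = I = J = R = 0 and S_a > 0. -/
/-!
With `E = I = J = R = 0` every infection term vanishes and `N = S_u + S_a`. The awareness terms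
`± α S_a S_u / N` cancel in the sum of the two susceptible equations, which leaves `μ N = Π`;
with `N = Π / μ` known, the `S_a` equation divided by `S_a ≠ 0` gives `α S_u = (μ + θ) N`.
-/

/-- The right-hand side vector field of the COVID-19 model. -/
noncomputable def covidRHS (Pi β ν α θ ε γ p η σ₁ σ₂ δ₁ δ₂ μ : ℝ)
    (su sa e i j r : ℝ) : Fin 6 → ℝ :=
  ![Pi - β * (i + ν * j) * su / (su + sa + e + i + j + r)
      - α * sa * su / (su + sa + e + i + j + r) - μ * su + θ * sa,
    α * sa * su / (su + sa + e + i + j + r)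
      - ε * β * (i + ν * j) * sa / (su + sa + e + i + j + r) - (μ + θ) * sa,
    β * (i + ν * j) * (su + ε * sa) / (su + sa + e + i + j + r) - (γ + μ) * e,
    (1 - p) * γ * e - (η + σ₁ + μ + δ₁) * i,
    p * γ * e + η * i - (σ₂ + μ + δ₂) * j,
    σ₁ * i + σ₂ * j - μ * r]

theorem covidRHS_diseaseFree_eq_zero_iff (Pi β ν α θ ε γ p η σ₁ σ₂ δ₁ δ₂ μ su sa : ℝ) :
    covidRHS Pi β ν α θ ε γ p η σ₁ σ₂ δ₁ δ₂ μ su sa 0 0 0 0 = 0 ↔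
      Pi - α * sa * su / (su + sa) - μ * su + θ * sa = 0 ∧
        α * sa * su / (su + sa) - (μ + θ) * sa = 0 := by
  simp [covidRHS, funext_iff, Fin.forall_fin_succ]

theorem awareness_equilibrium_iff {Pi α θ μ su sa : ℝ} (hPi : Pi ≠ 0) (hμ : μ ≠ 0) (hα : α ≠ 0)
    (hsa : sa ≠ 0) :
    (Pi - α * sa * su / (su + sa) - μ * su + θ * sa = 0 ∧
        α * sa * su / (su + sa) - (μ + θ) * sa = 0) ↔
      su = Pi * (μ + θ) / (μ * α) ∧ sa = Pi * (α - (μ + θ)) / (μ * α) := by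
  constructor
  · rintro ⟨hSu, hSa⟩
    have hN : su + sa = Pi / μ := by
      field_simp
      linear_combination -(hSu + hSa)
    have hN0 : su + sa ≠ 0 := hN ▸ div_ne_zero hPi hμ
    have hsu : α * su = (μ + θ) * (su + sa) := by
      have : sa * (α * su - (μ + θ) * (su + sa)) = 0 := by
        field_simp at hSa
        linear_combination hSa
      exact sub_eq_zero.mp ((mul_eq_zero.mp this).resolve_left hsa)
    have hsu' : su = Pi * (μ + θ) / (μ * α) := by
      rw [hN] at hsu
      field_simp at hsu ⊢
      linear_combination hsu
    refine ⟨hsu', ?_⟩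
    rw [eq_sub_of_add_eq' hN, hsu']
    field_simp
  · rintro ⟨rfl, rfl⟩
    have hN : Pi * (μ + θ) / (μ * α) + Pi * (α - (μ + θ)) / (μ * α) = Pi / μ := by
      field_simp
      ring
    rw [hN]
    constructor <;> field_simp <;> ring

theorem covid_E1_equilibrium_unique_general
    (Pi β ν α θ ε γ p η σ₁ σ₂ δ₁ δ₂ μ : ℝ)
    (hPi : 0 < Pi) (hα : 0 < α) (hμ : 0 < μ)
    (hαgt : α > μ + θ) :
    covidRHS Pi β ν α θ ε γ p η σ₁ σ₂ δ₁ δ₂ μ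
        (Pi * (μ + θ) / (μ * α)) (Pi * (α - (μ + θ)) / (μ * α)) 0 0 0 0 = 0 ∧
    0 < Pi * (α - (μ + θ)) / (μ * α) ∧
    (∀ su sa : ℝ, 0 < sa →
      covidRHS Pi β ν α θ ε γ p η σ₁ σ₂ δ₁ δ₂ μ su sa 0 0 0 0 = 0 →
      su = Pi * (μ + θ) / (μ * α) ∧ sa = Pi * (α - (μ + θ)) / (μ * α)) := by
  have hsa₁ : 0 < Pi * (α - (μ + θ)) / (μ * α) := by
    have : 0 < α - (μ + θ) := sub_pos.mpr hαgt
    positivity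
  have h_iff {su sa : ℝ} (hsa : 0 < sa) :=
    (covidRHS_diseaseFree_eq_zero_iff Pi β ν α θ ε γ p η σ₁ σ₂ δ₁ δ₂ μ su sa).trans
      (awareness_equilibrium_iff (su := su) hPi.ne' hμ.ne' hα.ne' hsa.ne')
  exact ⟨(h_iff hsa₁).mpr ⟨rfl, rfl⟩, hsa₁, fun su sa hsa => (h_iff hsa).mp⟩

/-- if `α > μ + θ`, then
`E₁ = (Π(μ+θ)/(μα), Π(α−(μ+θ))/(μα), 0, 0, 0, 0)` is an equilibrium of the
COVID-19 system with positive `S_a`-component, and it is the unique equilibrium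
with `E = I = J = R = 0` and `S_a > 0`. -/
theorem covid_E1_equilibrium_unique
    (Pi β ν α θ ε γ p η σ₁ σ₂ δ₁ δ₂ μ : ℝ)
    (hPi : 0 < Pi) (hβ : 0 < β) (hν : 0 < ν) (hν1 : ν < 1) (hα : 0 < α)
    (hθ : 0 < θ) (hε : 0 < ε) (hε1 : ε < 1) (hγ : 0 < γ)
    (hp : 0 < p) (hp1 : p < 1) (hη : 0 < η) (hσ₁ : 0 < σ₁) (hσ₂ : 0 < σ₂)
    (hδ₁ : 0 < δ₁) (hδ₂ : 0 < δ₂) (hμ : 0 < μ)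
    (hαgt : α > μ + θ) :
    covidRHS Pi β ν α θ ε γ p η σ₁ σ₂ δ₁ δ₂ μ
        (Pi * (μ + θ) / (μ * α)) (Pi * (α - (μ + θ)) / (μ * α)) 0 0 0 0 = 0 ∧
    0 < Pi * (α - (μ + θ)) / (μ * α) ∧
    (∀ su sa : ℝ, 0 < sa →
      covidRHS Pi β ν α θ ε γ p η σ₁ σ₂ δ₁ δ₂ μ su sa 0 0 0 0 = 0 →
      su = Pi * (μ + θ) / (μ * α) ∧ sa = Pi * (α - (μ + θ)) / (μ * α)) :=
  covid_E1_equilibrium_unique_general Pi β ν α θ ε γ p η σ₁ σ₂ δ₁ δ₂ μ hPi hα hμ hαgt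
end

section
/- For the 3×3 matrices F = [[0, βm₃, νβm₃], [0,0,0], [0,0,0]] and V = [[γ+μ, 0, 0], [−(1−p)γ, m₁, 0], [−pγ, −η, m₂]], the matrix V is invertible and the spectral radius (dominant eigenvalue) of FV⁻¹ equals R₀ = (m₃βγ/(m₂(μ+γ)))·[(1−p)(ην+m₂)/m₁ + pν]. -/
/-!
Only the first row of `F` is nonzero, hence so is only the first row of `F V⁻¹`. Such a matrix is
upper triangular with diagonal `(a, 0, …, 0)`, so its characteristic polynomial is
`(X - a) X ^ n`: its eigenvalues are `a = (F V⁻¹)₀₀` and `0`, and the spectral radius is `a`.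
Since `V` is lower triangular, its inverse is explicit, and expanding `(F V⁻¹)₀₀` gives `R₀ ≥ 0`.
-/

open Polynomial Matrix

namespace Matrix

variable {R : Type*} [CommRing R] {n : ℕ}

theorem isUpperTriangular_of_forall_ne_zero_row_eq_zero {A : Matrix (Fin (n + 1)) (Fin (n + 1)) R}
    (hA : ∀ i ≠ 0, A i = 0) : A.IsUpperTriangular := by
  intro i j hji
  have hi : i ≠ 0 := ne_of_gt (lt_of_le_of_lt (Fin.zero_le j) hji)
  simp [hA i hi]

theorem charpoly_eq_of_forall_ne_zero_row_eq_zero {A : Matrix (Fin (n + 1)) (Fin (n + 1)) R}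
    (hA : ∀ i ≠ 0, A i = 0) : A.charpoly = (X - C (A 0 0)) * X ^ n := by
  rw [charpoly_of_isUpperTriangular A (isUpperTriangular_of_forall_ne_zero_row_eq_zero hA),
    Fin.prod_univ_succ]
  simp [hA _ (Fin.succ_ne_zero _)]

theorem mul_row_eq_zero {k l m : Type*} [Fintype m] {A : Matrix k m R} {B : Matrix m l R} {i : k}
    (hi : A i = 0) : (A * B) i = 0 := by
  ext j
  simp [mul_apply, hi]

theorem inv_fin_three_lowerTriangular {K : Type*} [Field K] {a b c d e f : K}
    (ha : a ≠ 0) (hd : d ≠ 0) (hf : f ≠ 0) :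
    (!![a, 0, 0; b, d, 0; c, e, f])⁻¹ =
      !![a⁻¹, 0, 0; -b / (a * d), d⁻¹, 0; (b * e - c * d) / (a * d * f), -e / (d * f), f⁻¹] := by
  refine inv_eq_right_inv ?_
  ext i j
  fin_cases i <;> fin_cases j <;>
    simp only [Fin.zero_eta, Fin.mk_one, Fin.reduceFinMk, Fin.isValue, mul_apply, of_apply,
      cons_val', cons_val_fin_one, cons_val_zero, cons_val_one, cons_val, Fin.sum_univ_three,
      mul_zero, zero_mul, add_zero, zero_add, one_apply_eq, one_apply_ne, ne_eq, Fin.reduceEq,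
      zero_ne_one, one_ne_zero, not_false_eq_true] <;>
    field_simp <;> ring

end Matrix

theorem Complex.norm_le_of_isRoot_sub_C_mul_X_pow {a : ℝ} (ha : 0 ≤ a) {n : ℕ} {z : ℂ}
    (hz : ((X - C (a : ℂ)) * X ^ n).IsRoot z) : ‖z‖ ≤ a := by
  rw [IsRoot.def, eval_mul, eval_pow, eval_sub, eval_X, eval_C, mul_eq_zero] at hz
  rcases hz with hz | hz
  · rw [sub_eq_zero.mp hz, Complex.norm_of_nonneg ha]
  · rw [eq_zero_of_pow_eq_zero hz, norm_zero]
    exact ha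

theorem covid_next_generation_spectral_radius_general
    (β ν α θ ε γ p η σ₁ σ₂ δ₁ δ₂ μ : ℝ)
    (hβ : 0 < β) (hν : 0 < ν) (hα : 0 < α) (hθ : 0 < θ)
    (hε : 0 < ε) (hγ : 0 < γ)
    (hp : 0 < p) (hp1 : p < 1) (hη : 0 < η) (hσ₁ : 0 < σ₁) (hσ₂ : 0 < σ₂)
    (hδ₁ : 0 < δ₁) (hδ₂ : 0 < δ₂) (hμ : 0 < μ) (hαgt : α > μ + θ)
    (m₁ m₂ m₃ R₀ : ℝ)
    (hm₁ : m₁ = η + σ₁ + μ + δ₁)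
    (hm₂ : m₂ = σ₂ + μ + δ₂)
    (hm₃ : m₃ = ((θ + μ) + ε * (α - (θ + μ))) / α)
    (hR₀ : R₀ = (m₃ * β * γ / (m₂ * (μ + γ))) * ((1 - p) * (η * ν + m₂) / m₁ + p * ν))
    (F V : Matrix (Fin 3) (Fin 3) ℝ)
    (hF : F = !![0, β * m₃, ν * β * m₃; 0, 0, 0; 0, 0, 0])
    (hV : V = !![γ + μ, 0, 0; -(1 - p) * γ, m₁, 0; -p * γ, -η, m₂]) :
    IsUnit V.det ∧
    ((F * V⁻¹).map (fun x : ℝ => (x : ℂ))).charpoly.IsRoot (R₀ : ℂ) ∧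
    (∀ z : ℂ, ((F * V⁻¹).map (fun x : ℝ => (x : ℂ))).charpoly.IsRoot z →
      ‖z‖ ≤ R₀) := by
  have hm₁pos : 0 < m₁ := by rw [hm₁]; positivity
  have hm₂pos : 0 < m₂ := by rw [hm₂]; positivity
  have hm₃pos : 0 < m₃ := by
    have : 0 < α - (θ + μ) := by linarith
    rw [hm₃]; positivity
  have hR₀nonneg : 0 ≤ R₀ := by
    have : 0 < 1 - p := by linarith
    rw [hR₀]; positivity
  have hdet : V.det = (γ + μ) * m₁ * m₂ := by
    rw [hV, det_fin_three]; simp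
  have hentry : (F * V⁻¹) 0 0 = R₀ := by
    rw [hF, hV, inv_fin_three_lowerTriangular (by positivity) hm₁pos.ne' hm₂pos.ne', hR₀]
    simp only [mul_apply, of_apply, cons_val', cons_val_fin_one, cons_val_zero, cons_val_one,
      cons_val, Fin.sum_univ_three, zero_mul, zero_add]
    field_simp
    ring
  have hrows : ∀ i ≠ 0, ((F * V⁻¹).map (fun x : ℝ => (x : ℂ))) i = 0 := by
    intro i hi
    have hFi : F i = 0 := by
      rw [hF]
      ext j
      fin_cases i <;> fin_cases j <;> simp at hi ⊢
    ext j
    simp [mul_row_eq_zero hFi]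
  have hcp := charpoly_eq_of_forall_ne_zero_row_eq_zero hrows
  rw [map_apply, hentry] at hcp
  refine ⟨isUnit_iff_ne_zero.mpr (by rw [hdet]; positivity), ?_, ?_⟩
  · simp [hcp]
  · intro z hz
    exact Complex.norm_le_of_isRoot_sub_C_mul_X_pow hR₀nonneg (hcp ▸ hz)

/-- for the next-generation matrices `F` and `V`, the matrix `V`
is invertible and the spectral radius (dominant eigenvalue) of `F V⁻¹` equals
`R₀ = (m₃βγ/(m₂(μ+γ)))·[(1−p)(ην+m₂)/m₁ + pν]`: `R₀` is an eigenvalue of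
`F V⁻¹` and every complex eigenvalue has modulus at most `R₀`. -/
theorem covid_next_generation_spectral_radius
    (β ν α θ ε γ p η σ₁ σ₂ δ₁ δ₂ μ : ℝ)
    (hβ : 0 < β) (hν : 0 < ν) (hν1 : ν < 1) (hα : 0 < α) (hθ : 0 < θ)
    (hε : 0 < ε) (hε1 : ε < 1) (hγ : 0 < γ)
    (hp : 0 < p) (hp1 : p < 1) (hη : 0 < η) (hσ₁ : 0 < σ₁) (hσ₂ : 0 < σ₂)
    (hδ₁ : 0 < δ₁) (hδ₂ : 0 < δ₂) (hμ : 0 < μ) (hαgt : α > μ + θ)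
    (m₁ m₂ m₃ R₀ : ℝ)
    (hm₁ : m₁ = η + σ₁ + μ + δ₁)
    (hm₂ : m₂ = σ₂ + μ + δ₂)
    (hm₃ : m₃ = ((θ + μ) + ε * (α - (θ + μ))) / α)
    (hR₀ : R₀ = (m₃ * β * γ / (m₂ * (μ + γ))) * ((1 - p) * (η * ν + m₂) / m₁ + p * ν))
    (F V : Matrix (Fin 3) (Fin 3) ℝ)
    (hF : F = !![0, β * m₃, ν * β * m₃; 0, 0, 0; 0, 0, 0])
    (hV : V = !![γ + μ, 0, 0; -(1 - p) * γ, m₁, 0; -p * γ, -η, m₂]) :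
    IsUnit V.det ∧
    ((F * V⁻¹).map (fun x : ℝ => (x : ℂ))).charpoly.IsRoot (R₀ : ℂ) ∧
    (∀ z : ℂ, ((F * V⁻¹).map (fun x : ℝ => (x : ℂ))).charpoly.IsRoot z →
      ‖z‖ ≤ R₀) :=
  covid_next_generation_spectral_radius_general β ν α θ ε γ p η σ₁ σ₂ δ₁ δ₂ μ hβ hν hα hθ hε hγ hp
    hp1 hη hσ₁ hσ₂ hδ₁ hδ₂ hμ hαgt m₁ m₂ m₃ R₀ hm₁ hm₂ hm₃ hR₀ F V hF hV
end

section
/- Suppose β > max{δ₁, δ₂/ν} and R₁ > 1. Then the COVID-19 ODE system has an awareness-free endemic equilibrium E₂ = (S_u*, 0, E*, I*, J*, R*) with all nonzero components positive, given by E* = Π(R₁ − 1)/((β−δ₁)m₄ + (βν−δ₂)m₅), I* = m₄E*, J* = m₅E*, R* = (σ₁m₄ + σ₂m₅)E*/μ, N* = (Π − δ₁m₄E* − δ₂m₅E*)/μ, λ* = β(I*+νJ*)/N*, S_u* = Π/(λ* + μ), and E* = λ*S_u*/(γ+μ); moreover E₂ is the unique equilibrium with S_a = 0 and E > 0. -/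
section AwarenessFree

variable {Pi β ν α θ ε γ p η σ₁ σ₂ δ₁ δ₂ μ : ℝ}

theorem covidRHS_eq_zero_iff_of_sa_eq_zero {su e i j r : ℝ} :
    covidRHS Pi β ν α θ ε γ p η σ₁ σ₂ δ₁ δ₂ μ su 0 e i j r = 0 ↔
      μ * su = Pi - β * (i + ν * j) * su / (su + e + i + j + r) ∧
      β * (i + ν * j) * su / (su + e + i + j + r) = (γ + μ) * e ∧
      (η + σ₁ + μ + δ₁) * i = (1 - p) * γ * e ∧
      (σ₂ + μ + δ₂) * j = p * γ * e + η * i ∧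
      μ * r = σ₁ * i + σ₂ * j := by
  simp only [covidRHS, add_zero, mul_zero, zero_mul, zero_div, sub_zero, sub_self, funext_iff,
    _root_.Pi.zero_apply, Fin.forall_fin_succ, Fin.isValue, Matrix.cons_val_zero,
    Matrix.cons_val_succ, Matrix.cons_val_fin_one, forall_const, true_and]
  constructor <;> rintro ⟨h₀, h₂, h₃, h₄, h₅⟩ <;>
    exact ⟨by linarith, by linarith, by linarith, by linarith, by linarith⟩

theorem covidRHS_eq_zero_force_of_infection {su e i j r lam : ℝ}
    (heq : covidRHS Pi β ν α θ ε γ p η σ₁ σ₂ δ₁ δ₂ μ su 0 e i j r = 0)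
    (hlam : lam = β * (i + ν * j) / (su + e + i + j + r)) :
    su * (lam + μ) = Pi ∧ lam * su = (γ + μ) * e := by
  obtain ⟨hc₀, hc₂, -⟩ := covidRHS_eq_zero_iff_of_sa_eq_zero.mp heq
  rw [mul_div_right_comm, ← hlam] at hc₀ hc₂
  exact ⟨by linear_combination hc₀, hc₂⟩

theorem infectious_ratios_spec {m₄ m₅ R₁ : ℝ} (hγ : 0 < γ) (hp : 0 < p) (hp1 : p < 1)
    (hη : 0 ≤ η) (hσ₁ : 0 ≤ σ₁) (hσ₂ : 0 ≤ σ₂) (hδ₁ : 0 ≤ δ₁) (hδ₂ : 0 ≤ δ₂) (hμ : 0 < μ)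
    (hm₄ : m₄ = (1 - p) * γ / (η + σ₁ + μ + δ₁))
    (hm₅ : m₅ = p * γ / (σ₂ + μ + δ₂) + η * (1 - p) * γ / ((η + σ₁ + μ + δ₁) * (σ₂ + μ + δ₂)))
    (hR₁ : R₁ = (β * γ / ((σ₂ + μ + δ₂) * (μ + γ))) *
      ((1 - p) * (η * ν + (σ₂ + μ + δ₂)) / (η + σ₁ + μ + δ₁) + p * ν)) :
    0 < m₄ ∧ 0 < m₅ ∧ (η + σ₁ + μ + δ₁) * m₄ = (1 - p) * γ ∧
      (σ₂ + μ + δ₂) * m₅ = p * γ + η * m₄ ∧ β * (m₄ + ν * m₅) = (γ + μ) * R₁ := by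
  have hm₁ : 0 < η + σ₁ + μ + δ₁ := by positivity
  have hm₂ : 0 < σ₂ + μ + δ₂ := by positivity
  have h1p : 0 < 1 - p := sub_pos.2 hp1
  refine ⟨by rw [hm₄]; positivity, by rw [hm₅]; positivity, by rw [hm₄]; field_simp,
    by rw [hm₅, hm₄]; field_simp, ?_⟩
  rw [hm₄, hm₅, hR₁]
  field_simp
  ring

theorem total_population_balance {su e i j r : ℝ}
    (hsu : μ * su = Pi - (γ + μ) * e) (hi : (η + σ₁ + μ + δ₁) * i = (1 - p) * γ * e)
    (hj : (σ₂ + μ + δ₂) * j = p * γ * e + η * i) (hr : μ * r = σ₁ * i + σ₂ * j) :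
    μ * (su + e + i + j + r) = Pi - δ₁ * i - δ₂ * j := by
  linear_combination hsu + hi + hj + hr

theorem disease_death_flux_lt {m₄ m₅ : ℝ} (hμ : 0 < μ) (hσ₁ : 0 ≤ σ₁) (hσ₂ : 0 ≤ σ₂)
    (hm₄ : 0 ≤ m₄) (hm₅ : 0 ≤ m₅) (h₄ : (η + σ₁ + μ + δ₁) * m₄ = (1 - p) * γ)
    (h₅ : (σ₂ + μ + δ₂) * m₅ = p * γ + η * m₄) :
    δ₁ * m₄ + δ₂ * m₅ < γ + μ := by
  have h₁ : 0 ≤ (σ₁ + μ) * m₄ := mul_nonneg (by positivity) hm₄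
  have h₂ : 0 ≤ (σ₂ + μ) * m₅ := mul_nonneg (by positivity) hm₅
  linear_combination h₄ + h₅ + h₁ + h₂ + hμ

theorem mul_susceptible_eq_total_iff {su e N m₄ m₅ R₁ : ℝ} (hμ : μ ≠ 0)
    (hsu : μ * su = Pi - (γ + μ) * e) (hN : μ * N = Pi - (δ₁ * m₄ + δ₂ * m₅) * e)
    (hR₁ : β * (m₄ + ν * m₅) = (γ + μ) * R₁) :
    R₁ * su = N ↔ ((β - δ₁) * m₄ + (β * ν - δ₂) * m₅) * e = Pi * (R₁ - 1) := by
  have key : μ * (R₁ * su - N) = Pi * (R₁ - 1) - ((β - δ₁) * m₄ + (β * ν - δ₂) * m₅) * e := by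
    linear_combination R₁ * hsu - hN + e * hR₁
  rw [← sub_eq_zero, ← mul_right_inj' hμ, mul_zero, key, sub_eq_zero, eq_comm]

theorem awarenessFree_coeff_pos {m₄ m₅ R₁ : ℝ} (hγμ : 0 < γ + μ) (hR₁ : 1 < R₁)
    (hflux : δ₁ * m₄ + δ₂ * m₅ < γ + μ) (hβR₁ : β * (m₄ + ν * m₅) = (γ + μ) * R₁) :
    0 < (β - δ₁) * m₄ + (β * ν - δ₂) * m₅ := by
  have := mul_pos hγμ (sub_pos.2 hR₁)
  linear_combination -hβR₁ + this + hflux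

theorem endemic_exposed_bounds {m₄ m₅ R₁ e : ℝ} (hPi : 0 < Pi) (hR₁ : 1 < R₁)
    (hflux : δ₁ * m₄ + δ₂ * m₅ < γ + μ) (hβR₁ : β * (m₄ + ν * m₅) = (γ + μ) * R₁)
    (hD : 0 < (β - δ₁) * m₄ + (β * ν - δ₂) * m₅)
    (he : ((β - δ₁) * m₄ + (β * ν - δ₂) * m₅) * e = Pi * (R₁ - 1)) :
    0 < e ∧ (γ + μ) * e < Pi := by
  have hDe : 0 < ((β - δ₁) * m₄ + (β * ν - δ₂) * m₅) * e := he ▸ mul_pos hPi (sub_pos.2 hR₁)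
  refine ⟨(pos_iff_pos_of_mul_pos hDe).mp hD, lt_of_mul_lt_mul_left ?_ hD.le⟩
  linear_combination (γ + μ) * he - Pi * hβR₁ + Pi * hflux

section Reduced

variable {m₄ m₅ R₁ : ℝ} (hμ : μ ≠ 0) (h₄ : (η + σ₁ + μ + δ₁) * m₄ = (1 - p) * γ)
  (h₅ : (σ₂ + μ + δ₂) * m₅ = p * γ + η * m₄) (hR₁ : β * (m₄ + ν * m₅) = (γ + μ) * R₁)
include hμ h₄ h₅ hR₁

theorem awarenessFree_equilibrium_eq (hγμ : γ + μ ≠ 0) (hm₁ : η + σ₁ + μ + δ₁ ≠ 0)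
    (hm₂ : σ₂ + μ + δ₂ ≠ 0) {su e i j r : ℝ} (he : 0 < e)
    (heq : covidRHS Pi β ν α θ ε γ p η σ₁ σ₂ δ₁ δ₂ μ su 0 e i j r = 0) :
    i = m₄ * e ∧ j = m₅ * e ∧ μ * r = (σ₁ * m₄ + σ₂ * m₅) * e ∧
      μ * su = Pi - (γ + μ) * e ∧
      ((β - δ₁) * m₄ + (β * ν - δ₂) * m₅) * e = Pi * (R₁ - 1) := by
  obtain ⟨hc₀, hc₂, hc₃, hc₄, hc₅⟩ := covidRHS_eq_zero_iff_of_sa_eq_zero.mp heq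
  have hi : i = m₄ * e := mul_left_cancel₀ hm₁ (by linear_combination hc₃ - e * h₄)
  have hj : j = m₅ * e := mul_left_cancel₀ hm₂ (by linear_combination hc₄ - e * h₅ + η * hi)
  have hN : su + e + i + j + r ≠ 0 := by
    rintro hN
    rw [hN, div_zero] at hc₂
    exact mul_ne_zero hγμ he.ne' hc₂.symm
  have hsu : μ * su = Pi - (γ + μ) * e := by rwa [hc₂] at hc₀
  have hRN : R₁ * su = su + e + i + j + r := by
    rw [div_eq_iff hN] at hc₂
    exact mul_left_cancel₀ (mul_ne_zero hγμ he.ne')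
      (by linear_combination hc₂ - e * su * hR₁ - β * su * hi - β * ν * su * hj)
  have hbal := total_population_balance hsu hc₃ hc₄ hc₅
  refine ⟨hi, hj, by rw [hc₅, hi, hj]; ring, hsu, ?_⟩
  exact (mul_susceptible_eq_total_iff hμ hsu (by rw [hbal, hi, hj]; ring) hR₁).mp hRN

theorem covidRHS_eq_zero_of_awarenessFree (hR₁0 : R₁ ≠ 0) {su e i j r : ℝ} (hsu0 : su ≠ 0)
    (hi : i = m₄ * e) (hj : j = m₅ * e) (hr : μ * r = (σ₁ * m₄ + σ₂ * m₅) * e)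
    (hsu : μ * su = Pi - (γ + μ) * e)
    (he : ((β - δ₁) * m₄ + (β * ν - δ₂) * m₅) * e = Pi * (R₁ - 1)) :
    covidRHS Pi β ν α θ ε γ p η σ₁ σ₂ δ₁ δ₂ μ su 0 e i j r = 0 := by
  have hc₃ : (η + σ₁ + μ + δ₁) * i = (1 - p) * γ * e := by rw [hi]; linear_combination e * h₄
  have hc₄ : (σ₂ + μ + δ₂) * j = p * γ * e + η * i := by
    rw [hi, hj]; linear_combination e * h₅
  have hc₅ : μ * r = σ₁ * i + σ₂ * j := by rw [hr, hi, hj]; ring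
  have hRN : R₁ * su = su + e + i + j + r :=
    (mul_susceptible_eq_total_iff hμ hsu
      (by rw [total_population_balance hsu hc₃ hc₄ hc₅, hi, hj]; ring) hR₁).mpr he
  have hc₂ : β * (i + ν * j) * su / (su + e + i + j + r) = (γ + μ) * e := by
    rw [← hRN, hi, hj]
    field_simp
    linear_combination e * hR₁
  exact covidRHS_eq_zero_iff_of_sa_eq_zero.mpr ⟨by rw [hc₂]; exact hsu, hc₂, hc₃, hc₄, hc₅⟩

end Reduced

end AwarenessFree

theorem covid_awareness_free_endemic_equilibrium_general
    (Pi β ν α θ ε γ p η σ₁ σ₂ δ₁ δ₂ μ : ℝ)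
    (hPi : 0 < Pi) (hγ : 0 < γ)
    (hp : 0 < p) (hp1 : p < 1) (hη : 0 < η) (hσ₁ : 0 < σ₁) (hσ₂ : 0 < σ₂)
    (hδ₁ : 0 < δ₁) (hδ₂ : 0 < δ₂) (hμ : 0 < μ)
    (m₁ m₂ m₄ m₅ R₁ : ℝ)
    (hm₁ : m₁ = η + σ₁ + μ + δ₁)
    (hm₂ : m₂ = σ₂ + μ + δ₂)
    (hm₄ : m₄ = (1 - p) * γ / m₁)
    (hm₅ : m₅ = p * γ / m₂ + η * (1 - p) * γ / (m₁ * m₂))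
    (hR₁ : R₁ = (β * γ / (m₂ * (μ + γ))) * ((1 - p) * (η * ν + m₂) / m₁ + p * ν))
    (hR₁gt : 1 < R₁)
    (Estar Istar Jstar Rstar Nstar lamstar Sustar : ℝ)
    (hEstar : Estar = Pi * (R₁ - 1) / ((β - δ₁) * m₄ + (β * ν - δ₂) * m₅))
    (hIstar : Istar = m₄ * Estar)
    (hJstar : Jstar = m₅ * Estar)
    (hRstar : Rstar = (σ₁ * m₄ * Estar + σ₂ * m₅ * Estar) / μ)
    (hNstar : Nstar = (Pi - δ₁ * m₄ * Estar - δ₂ * m₅ * Estar) / μ)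
    (hlam : lamstar = β * (Istar + ν * Jstar) / Nstar)
    (hSustar : Sustar = Pi / (lamstar + μ)) :
    covidRHS Pi β ν α θ ε γ p η σ₁ σ₂ δ₁ δ₂ μ Sustar 0 Estar Istar Jstar Rstar = 0 ∧
    0 < Sustar ∧ 0 < Estar ∧ 0 < Istar ∧ 0 < Jstar ∧ 0 < Rstar ∧
    Estar = lamstar * Sustar / (γ + μ) ∧
    (∀ su e i j r : ℝ, 0 < e →
      covidRHS Pi β ν α θ ε γ p η σ₁ σ₂ δ₁ δ₂ μ su 0 e i j r = 0 →
      su = Sustar ∧ e = Estar ∧ i = Istar ∧ j = Jstar ∧ r = Rstar) := by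
  subst hm₁ hm₂
  obtain ⟨hm₄pos, hm₅pos, h₄, h₅, hR⟩ :=
    infectious_ratios_spec hγ hp hp1 hη.le hσ₁.le hσ₂.le hδ₁.le hδ₂.le hμ hm₄ hm₅ hR₁
  have hflux := disease_death_flux_lt hμ hσ₁.le hσ₂.le hm₄pos.le hm₅pos.le h₄ h₅
  have hDpos := awarenessFree_coeff_pos (by positivity) hR₁gt hflux hR
  have hDE : ((β - δ₁) * m₄ + (β * ν - δ₂) * m₅) * Estar = Pi * (R₁ - 1) := by
    rw [hEstar]; field_simp
  obtain ⟨hEpos, hEPi⟩ := endemic_exposed_bounds hPi hR₁gt hflux hR hDpos hDE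
  set su₀ := (Pi - (γ + μ) * Estar) / μ
  have hsu₀ : μ * su₀ = Pi - (γ + μ) * Estar := mul_div_cancel₀ _ hμ.ne'
  have hsu₀pos : 0 < su₀ := div_pos (sub_pos.2 hEPi) hμ
  have hr : μ * Rstar = (σ₁ * m₄ + σ₂ * m₅) * Estar := by rw [hRstar]; field_simp
  have hequil : covidRHS Pi β ν α θ ε γ p η σ₁ σ₂ δ₁ δ₂ μ su₀ 0 Estar Istar Jstar Rstar = 0 :=
    covidRHS_eq_zero_of_awarenessFree hμ.ne' h₄ h₅ hR (zero_lt_one.trans hR₁gt).ne'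
      hsu₀pos.ne' hIstar hJstar hr hsu₀ hDE
  have hN : Nstar = su₀ + Estar + Istar + Jstar + Rstar := by
    obtain ⟨-, -, hc₃, hc₄, hc₅⟩ := covidRHS_eq_zero_iff_of_sa_eq_zero.mp hequil
    rw [hNstar, div_eq_iff hμ.ne']
    linear_combination -total_population_balance hsu₀ hc₃ hc₄ hc₅ + δ₁ * hIstar + δ₂ * hJstar
  obtain ⟨hsu₀lam, hlamsu₀⟩ := covidRHS_eq_zero_force_of_infection hequil (hN ▸ hlam)
  have hSu : Sustar = su₀ := by
    rw [hSustar, ← hsu₀lam, mul_div_cancel_right₀ _ (right_ne_zero_of_mul (hsu₀lam ▸ hPi.ne'))]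
  refine ⟨hSu ▸ hequil, hSu ▸ hsu₀pos, hEpos, hIstar ▸ mul_pos hm₄pos hEpos,
    hJstar ▸ mul_pos hm₅pos hEpos, by rw [hRstar]; positivity, ?_, ?_⟩
  · rw [hSu, hlamsu₀]; field_simp
  · intro su e i j r he heq
    obtain ⟨hi, hj, hr', hsu, hDe⟩ := awarenessFree_equilibrium_eq hμ.ne' h₄ h₅ hR
      (by positivity) (by positivity) (by positivity) he heq
    obtain rfl : e = Estar := mul_left_cancel₀ hDpos.ne' (hDe.trans hDE.symm)
    exact ⟨hSu ▸ mul_left_cancel₀ hμ.ne' (hsu.trans hsu₀.symm), rfl, hi ▸ hIstar.symm,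
      hj ▸ hJstar.symm, mul_left_cancel₀ hμ.ne' (hr'.trans hr.symm)⟩

/-- if `β > max{δ₁, δ₂/ν}` and `R₁ > 1`, the COVID-19 system has
an awareness-free endemic equilibrium `E₂ = (S_u*, 0, E*, I*, J*, R*)` with all
nonzero components positive, given by the stated formulas; moreover it is the
unique equilibrium with `S_a = 0` and `E > 0`. -/
theorem covid_awareness_free_endemic_equilibrium
    (Pi β ν α θ ε γ p η σ₁ σ₂ δ₁ δ₂ μ : ℝ)
    (hPi : 0 < Pi) (hβ : 0 < β) (hν : 0 < ν) (hν1 : ν < 1) (hα : 0 < α)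
    (hθ : 0 < θ) (hε : 0 < ε) (hε1 : ε < 1) (hγ : 0 < γ)
    (hp : 0 < p) (hp1 : p < 1) (hη : 0 < η) (hσ₁ : 0 < σ₁) (hσ₂ : 0 < σ₂)
    (hδ₁ : 0 < δ₁) (hδ₂ : 0 < δ₂) (hμ : 0 < μ)
    (m₁ m₂ m₄ m₅ R₁ : ℝ)
    (hm₁ : m₁ = η + σ₁ + μ + δ₁)
    (hm₂ : m₂ = σ₂ + μ + δ₂)
    (hm₄ : m₄ = (1 - p) * γ / m₁)
    (hm₅ : m₅ = p * γ / m₂ + η * (1 - p) * γ / (m₁ * m₂))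
    (hR₁ : R₁ = (β * γ / (m₂ * (μ + γ))) * ((1 - p) * (η * ν + m₂) / m₁ + p * ν))
    (hβgt : max δ₁ (δ₂ / ν) < β) (hR₁gt : 1 < R₁)
    (Estar Istar Jstar Rstar Nstar lamstar Sustar : ℝ)
    (hEstar : Estar = Pi * (R₁ - 1) / ((β - δ₁) * m₄ + (β * ν - δ₂) * m₅))
    (hIstar : Istar = m₄ * Estar)
    (hJstar : Jstar = m₅ * Estar)
    (hRstar : Rstar = (σ₁ * m₄ * Estar + σ₂ * m₅ * Estar) / μ)
    (hNstar : Nstar = (Pi - δ₁ * m₄ * Estar - δ₂ * m₅ * Estar) / μ)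
    (hlam : lamstar = β * (Istar + ν * Jstar) / Nstar)
    (hSustar : Sustar = Pi / (lamstar + μ)) :
    covidRHS Pi β ν α θ ε γ p η σ₁ σ₂ δ₁ δ₂ μ Sustar 0 Estar Istar Jstar Rstar = 0 ∧
    0 < Sustar ∧ 0 < Estar ∧ 0 < Istar ∧ 0 < Jstar ∧ 0 < Rstar ∧
    Estar = lamstar * Sustar / (γ + μ) ∧
    (∀ su e i j r : ℝ, 0 < e →
      covidRHS Pi β ν α θ ε γ p η σ₁ σ₂ δ₁ δ₂ μ su 0 e i j r = 0 →
      su = Sustar ∧ e = Estar ∧ i = Istar ∧ j = Jstar ∧ r = Rstar) :=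
  covid_awareness_free_endemic_equilibrium_general Pi β ν α θ ε γ p η σ₁ σ₂ δ₁ δ₂ μ hPi hγ hp hp1 hη
    hσ₁ hσ₂ hδ₁ hδ₂ hμ m₁ m₂ m₄ m₅ R₁ hm₁ hm₂ hm₄ hm₅ hR₁ hR₁gt Estar Istar Jstar Rstar Nstar
    lamstar Sustar hEstar hIstar hJstar hRstar hNstar hlam hSustar
end
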